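/- The map ∗ on Conf_n(P^{m-1}) defined by [l_1,...,l_n] ↦ [h_{[1,m-1]}, h_{[n,m-2]}, ..., h_{[2,m]}] (i.e. the i-th output is the dual point of the hyperplane spanned by l_{2-i},...,l_{m-i}, indices mod n) is an involution on generic configurations: ∗∘∗ = id. -/

import Mathlib

/-!
Let `W[a, r] = consecutiveSpan l a r` be the span of the lines `l_a, …, l_{a+r-1}`.
Genericity forces `dim W[a, r] = r` for `r ≤ m`, so two windows of lengths `s + 1` and `m - 1`
that together cover `m` consecutive indices meet in their common part `W[a, s]`. Peeling off one
window at a time, the `m - 1` windows of length `m - 1` containing the index `i` intersect in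
the line `l_i`. Applying `∗` twice takes the annihilator of the sum of the annihilators of
exactly these windows, i.e. the double annihilator of their intersection, which is the image
of `l_i` in the double dual.
-/

open Module Submodule

theorem iSup_fin_eq_iSup_lt {α : Type*} [CompleteLattice α] (f : ℕ → α) (r : ℕ) :
    ⨆ j : Fin r, f j = ⨆ k < r, f k :=
  le_antisymm (iSup_le fun j => le_iSup₂ (f := fun k _ => f k) j.1 j.2)
    (iSup₂_le fun k hk => le_iSup (fun j : Fin r => f j) ⟨k, hk⟩)

theorem iInf_fin_eq_iInf_lt {α : Type*} [CompleteLattice α] (f : ℕ → α) (r : ℕ) :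
    ⨅ j : Fin r, f j = ⨅ k < r, f k :=
  le_antisymm (le_iInf₂ fun k hk => iInf_le (fun j : Fin r => f j) ⟨k, hk⟩)
    (le_iInf fun j => iInf₂_le (f := fun k _ => f k) j.1 j.2)

section ConsecutiveSpan

variable {K V : Type*} [Field K] [AddCommGroup V] [Module K V] {n : ℕ}
  (l : ZMod n → Submodule K V)

noncomputable def consecutiveSpan (a : ZMod n) (r : ℕ) : Submodule K V :=
  ⨆ k < r, l (a + k)

theorem consecutiveSpan_eq_iSup_fin (a : ZMod n) (r : ℕ) :
    consecutiveSpan l a r = ⨆ j : Fin r, l (a + ((j : ℕ) : ZMod n)) :=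
  (iSup_fin_eq_iSup_lt (fun k => l (a + k)) r).symm

theorem le_consecutiveSpan {a : ZMod n} {k r : ℕ} (hk : k < r) :
    l (a + k) ≤ consecutiveSpan l a r :=
  le_biSup (fun k : ℕ => l (a + k)) hk

theorem consecutiveSpan_zero (a : ZMod n) : consecutiveSpan l a 0 = ⊥ := by
  simp [consecutiveSpan]

theorem consecutiveSpan_one (a : ZMod n) : consecutiveSpan l a 1 = l a := by
  simp [consecutiveSpan]

theorem consecutiveSpan_succ (a : ZMod n) (r : ℕ) :
    consecutiveSpan l a (r + 1) = consecutiveSpan l a r ⊔ l (a + r) :=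
  Nat.iSup_lt_succ _ r

theorem consecutiveSpan_add (a : ZMod n) (r s : ℕ) :
    consecutiveSpan l a (r + s) = consecutiveSpan l a r ⊔ consecutiveSpan l (a + r) s := by
  induction s with
  | zero => simp [consecutiveSpan_zero]
  | succ s ih =>
    rw [← add_assoc, consecutiveSpan_succ, ih, consecutiveSpan_succ, sup_assoc, Nat.cast_add,
      add_assoc]

theorem consecutiveSpan_mono {a : ZMod n} {r r' : ℕ} (h : r ≤ r') :
    consecutiveSpan l a r ≤ consecutiveSpan l a r' :=
  biSup_mono fun _ hk => hk.trans_le h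

theorem consecutiveSpan_add_le (a : ZMod n) (k s : ℕ) :
    consecutiveSpan l (a + k) s ≤ consecutiveSpan l a (k + s) :=
  (consecutiveSpan_add l a k s).symm ▸ le_sup_right

variable [FiniteDimensional K V] {l}

theorem finrank_consecutiveSpan_le (hl : ∀ i, finrank K (l i) ≤ 1) (a : ZMod n) (r : ℕ) :
    finrank K (consecutiveSpan l a r) ≤ r := by
  induction r with
  | zero => simp [consecutiveSpan_zero]
  | succ r ih =>
    rw [consecutiveSpan_succ]
    have := finrank_add_le_finrank_add_finrank (consecutiveSpan l a r) (l (a + r))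
    linarith [hl (a + r)]

theorem finrank_consecutiveSpan {m : ℕ} (hV : finrank K V = m)
    (hl : ∀ i, finrank K (l i) ≤ 1) (hgen : ∀ a, consecutiveSpan l a m = ⊤)
    (a : ZMod n) {r : ℕ} (hr : r ≤ m) :
    finrank K (consecutiveSpan l a r) = r := by
  refine le_antisymm (finrank_consecutiveSpan_le hl a r) ?_
  have hsplit := consecutiveSpan_add l a r (m - r)
  rw [Nat.add_sub_cancel' hr, hgen] at hsplit
  have := finrank_add_le_finrank_add_finrank (consecutiveSpan l a r)
    (consecutiveSpan l (a + r) (m - r))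
  rw [← hsplit, finrank_top, hV] at this
  have := finrank_consecutiveSpan_le hl (a + r) (m - r)
  omega

theorem consecutiveSpan_inf_consecutiveSpan {m : ℕ} (hV : finrank K V = m)
    (hl : ∀ i, finrank K (l i) ≤ 1) (hgen : ∀ a, consecutiveSpan l a m = ⊤)
    (a : ZMod n) {s t : ℕ} (hm : t + s + 1 = m) :
    consecutiveSpan l a (s + 1) ⊓ consecutiveSpan l (a - t) (t + s) = consecutiveSpan l a s := by
  set A := consecutiveSpan l a (s + 1)
  set B := consecutiveSpan l (a - t) (t + s)
  have hCA : consecutiveSpan l a s ≤ A := consecutiveSpan_mono l s.le_succ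
  have hCB : consecutiveSpan l a s ≤ B := by
    simpa using consecutiveSpan_add_le l (a - t) t s
  have hAB : A ⊔ B = ⊤ := by
    have hlast : l (a - t + ((t + s : ℕ) : ZMod n)) ≤ A := by
      rw [show a - t + ((t + s : ℕ) : ZMod n) = a + s by push_cast; ring]
      exact le_consecutiveSpan l s.lt_succ_self
    rw [eq_top_iff, ← hgen (a - t), ← hm, consecutiveSpan_succ]
    exact sup_le le_sup_right (hlast.trans le_sup_left)
  have hdim := finrank_sup_add_finrank_inf_eq A B
  rw [hAB, finrank_top, hV, finrank_consecutiveSpan hV hl hgen a (by omega),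
    finrank_consecutiveSpan hV hl hgen (a - t) (by omega)] at hdim
  refine (eq_of_le_of_finrank_eq (le_inf hCA hCB) ?_).symm
  rw [finrank_consecutiveSpan hV hl hgen a (by omega)]
  omega

theorem iInf_consecutiveSpan {m : ℕ} (hV : finrank K V = m)
    (hl : ∀ i, finrank K (l i) ≤ 1) (hgen : ∀ a, consecutiveSpan l a m = ⊤) (a : ZMod n)
    {k r : ℕ} (hm : k + r + 1 = m) :
    ⨅ j < k + 1, consecutiveSpan l (a - j) (k + r) = consecutiveSpan l a r := by
  induction k generalizing r with
  | zero => simp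
  | succ k ih =>
    rw [Nat.iInf_lt_succ, show k + 1 + r = k + (r + 1) by omega, ih (by omega),
      show k + (r + 1) = (k + 1) + r by omega]
    exact consecutiveSpan_inf_consecutiveSpan hV hl hgen a hm

end ConsecutiveSpan

/-- The involution `∗` of `Conf_n(P^{m-1})` at the level of lines: the `i`-th entry of
`∗[l_1,…,l_n]` is the dual line `h_{[2-i, m-i]}`, the annihilator of the hyperplane
spanned by the `m-1` consecutive lines `l_{2-i}, …, l_{m-i}` (indices mod `n`). -/
noncomputable def starMap (m n : ℕ) {W : Type} [AddCommGroup W] [Module ℂ W]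
    (l : ZMod n → Submodule ℂ W) : ZMod n → Submodule ℂ (Module.Dual ℂ W) :=
  fun i =>
    Submodule.dualAnnihilator (⨆ j : Fin (m - 1), l (2 - i + ((j : ℕ) : ZMod n)))

section StarMap

variable {m n : ℕ} {W : Type} [AddCommGroup W] [Module ℂ W]

theorem starMap_apply (l : ZMod n → Submodule ℂ W) (i : ZMod n) :
    starMap m n l i = (consecutiveSpan l (2 - i) (m - 1)).dualAnnihilator := by
  rw [consecutiveSpan_eq_iSup_fin]
  rfl

theorem starMap_starMap_apply [FiniteDimensional ℂ W] (l : ZMod n → Submodule ℂ W)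
    (i : ZMod n) :
    starMap m n (starMap m n l) i =
      (⨅ j < m - 1, consecutiveSpan l (i - j) (m - 1)).map (Dual.eval ℂ W) := by
  have hstar : ∀ k : ℕ, starMap m n l (2 - i + k) =
      (consecutiveSpan l (i - k) (m - 1)).dualAnnihilator := fun k => by
    rw [starMap_apply, show 2 - (2 - i + k) = i - k by ring]
  rw [starMap_apply, consecutiveSpan, biSup_congr fun k _ => hstar k,
    ← iSup_fin_eq_iSup_lt (fun k => (consecutiveSpan l (i - k) (m - 1)).dualAnnihilator),
    ← Subspace.dualAnnihilator_iInf_eq, Subspace.dualAnnihilator_dualAnnihilator_eq_map,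
    iInf_fin_eq_iInf_lt (fun k => consecutiveSpan l (i - k) (m - 1))]

end StarMap

theorem stmt_2_general (m n : ℕ) (hm : 1 < m)
    (l : ZMod n → Submodule ℂ (Fin m → ℂ))
    (hdim : ∀ i, Module.finrank ℂ (l i) = 1)
    (hgen : ∀ i : ZMod n, (⨆ j : Fin m, l (i + ((j : ℕ) : ZMod n))) = ⊤) :
    ∀ i : ZMod n, starMap m n (starMap m n l) i =
      Submodule.map (Module.evalEquiv ℂ (Fin m → ℂ)).toLinearMap (l i) := by
  intro i
  have hgen' : ∀ a, consecutiveSpan l a m = ⊤ := fun a =>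
    (consecutiveSpan_eq_iSup_fin l a m).trans (hgen a)
  obtain ⟨k, rfl⟩ : ∃ k, m = k + 2 := ⟨m - 2, by omega⟩
  rw [starMap_starMap_apply, show k + 2 - 1 = k + 1 from rfl,
    iInf_consecutiveSpan (finrank_fin_fun ℂ) (fun i => (hdim i).le) hgen' i (r := 1) rfl,
    consecutiveSpan_one, evalEquiv_toLinearMap]

/-- `∗ ∘ ∗ = id` on generic configurations (via the canonical identification of
`ℂ^m` with its double dual). -/
theorem stmt_2 (m n : ℕ) (hm : 1 < m) (hn : m + 1 < n)
    (l : ZMod n → Submodule ℂ (Fin m → ℂ))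
    (hdim : ∀ i, Module.finrank ℂ (l i) = 1)
    (hgen : ∀ i : ZMod n, (⨆ j : Fin m, l (i + ((j : ℕ) : ZMod n))) = ⊤) :
    ∀ i : ZMod n, starMap m n (starMap m n l) i =
      Submodule.map (Module.evalEquiv ℂ (Fin m → ℂ)).toLinearMap (l i) :=
  stmt_2_general m n hm l hdim hgen
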